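/- arXiv:1512.04810 — 2 statements merged into one kernel-verified Lean document; each statement's English description precedes it below -/
import Mathlib

section
/- Let n ≥ 1 and let Y : ℝⁿ∖{0} → ℝⁿ∖{0} be a homogeneous bijection (Y(λ·x) = λ·Y(x) for all nonzero real λ) such that Y and Y⁻¹ are smooth (C^∞). Define h(x) = (‖x‖ / ‖Y(x)‖)·Y(x) and S(x) = (‖Y(x)‖ / ‖x‖)·x on ℝⁿ∖{0}, where ‖·‖ is the Euclidean norm. Then: (i) Y = h ∘ S; (ii) S is a scaling map, i.e. its scaling function x ↦ ‖Y(x)‖/‖x‖ is smooth, strictly positive and homogeneous of degree 0; (iii) h is a homogeneous bijection of ℝⁿ∖{0}, smooth with smooth inverse, satisfying ‖h(x)‖ = ‖x‖ and h(−x) = −h(x) for every x ∈ ℝⁿ∖{0}. -/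
/-- Existence of the decomposition `Y = h ∘ S` of a homogeneous
diffeomorphism of `ℝⁿ∖{0}` into a norm-preserving, odd, homogeneous
diffeomorphism `h` and a scaling map `S`. -/
theorem tct_decomposition_exists (n : ℕ) (hn : 1 ≤ n)
    (Y Z : EuclideanSpace ℝ (Fin n) → EuclideanSpace ℝ (Fin n))
    (hbij : Set.BijOn Y {x | x ≠ 0} {x | x ≠ 0})
    (hinv : Set.InvOn Z Y {x | x ≠ 0} {x | x ≠ 0})
    (hhom : ∀ (l : ℝ), l ≠ 0 → ∀ x : EuclideanSpace ℝ (Fin n), x ≠ 0 →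
      Y (l • x) = l • Y x)
    (hYsm : ContDiffOn ℝ (⊤ : ℕ∞) Y {x | x ≠ 0})
    (hZsm : ContDiffOn ℝ (⊤ : ℕ∞) Z {x | x ≠ 0}) :
    -- (i) Y = h ∘ S
    (∀ x : EuclideanSpace ℝ (Fin n), x ≠ 0 →
      Y x = (fun y => (‖y‖ / ‖Y y‖) • Y y) ((fun y => (‖Y y‖ / ‖y‖) • y) x)) ∧
    -- (ii) S is a scaling map
    (∀ x : EuclideanSpace ℝ (Fin n), x ≠ 0 → 0 < ‖Y x‖ / ‖x‖) ∧
    (∀ (l : ℝ), l ≠ 0 → ∀ x : EuclideanSpace ℝ (Fin n), x ≠ 0 →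
      ‖Y (l • x)‖ / ‖l • x‖ = ‖Y x‖ / ‖x‖) ∧
    ContDiffOn ℝ (⊤ : ℕ∞) (fun x => ‖Y x‖ / ‖x‖) {x | x ≠ 0} ∧
    -- (iii) h is a smooth homogeneous bijection with smooth inverse,
    -- norm-preserving and odd
    Set.BijOn (fun y => (‖y‖ / ‖Y y‖) • Y y) {x | x ≠ 0} {x | x ≠ 0} ∧
    (∀ (l : ℝ), l ≠ 0 → ∀ x : EuclideanSpace ℝ (Fin n), x ≠ 0 →
      (fun y => (‖y‖ / ‖Y y‖) • Y y) (l • x) =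
        l • (fun y => (‖y‖ / ‖Y y‖) • Y y) x) ∧
    ContDiffOn ℝ (⊤ : ℕ∞) (fun y => (‖y‖ / ‖Y y‖) • Y y) {x | x ≠ 0} ∧
    (∃ h' : EuclideanSpace ℝ (Fin n) → EuclideanSpace ℝ (Fin n),
      Set.InvOn h' (fun y => (‖y‖ / ‖Y y‖) • Y y) {x | x ≠ 0} {x | x ≠ 0} ∧
      ContDiffOn ℝ (⊤ : ℕ∞) h' {x | x ≠ 0}) ∧
    (∀ x : EuclideanSpace ℝ (Fin n), x ≠ 0 →
      ‖(fun y => (‖y‖ / ‖Y y‖) • Y y) x‖ = ‖x‖) ∧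
    (∀ x : EuclideanSpace ℝ (Fin n), x ≠ 0 →
      (fun y => (‖y‖ / ‖Y y‖) • Y y) (-x) =
        -(fun y => (‖y‖ / ‖Y y‖) • Y y) x) := by
  -- Basic facts
  have hY0 : ∀ x : EuclideanSpace ℝ (Fin n), x ≠ 0 → Y x ≠ 0 := fun x hx => hbij.mapsTo hx
  have hZY : ∀ x : EuclideanSpace ℝ (Fin n), x ≠ 0 → Z (Y x) = x := fun x hx => hinv.1 hx
  have hYZ : ∀ y : EuclideanSpace ℝ (Fin n), y ≠ 0 → Y (Z y) = y := fun y hy => hinv.2 hy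
  have hZ0 : ∀ y : EuclideanSpace ℝ (Fin n), y ≠ 0 → Z y ≠ 0 := by
    intro y hy
    obtain ⟨x, hx, hxy⟩ := hbij.surjOn hy
    rw [← hxy, hZY x hx]; exact hx
  have hnx : ∀ x : EuclideanSpace ℝ (Fin n), x ≠ 0 → (0:ℝ) < ‖x‖ := fun x hx => norm_pos_iff.2 hx
  -- h homogeneity
  have hhomh : ∀ (l : ℝ), l ≠ 0 → ∀ x : EuclideanSpace ℝ (Fin n), x ≠ 0 →
      (‖l • x‖ / ‖Y (l • x)‖) • Y (l • x) = l • (‖x‖ / ‖Y x‖) • Y x := by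
    intro l hl x hx
    rw [hhom l hl x hx, norm_smul, norm_smul, smul_smul, smul_smul]
    congr 1
    have h2 : (‖Y x‖:ℝ) ≠ 0 := (hnx _ (hY0 x hx)).ne'
    have hla : (‖l‖:ℝ) ≠ 0 := norm_ne_zero_iff.2 hl
    field_simp
  -- h preserves norm
  have hnormh : ∀ x : EuclideanSpace ℝ (Fin n), x ≠ 0 → ‖(‖x‖ / ‖Y x‖) • Y x‖ = ‖x‖ := by
    intro x hx
    have h1 : (0:ℝ) < ‖x‖ := hnx x hx
    have h2 : (0:ℝ) < ‖Y x‖ := hnx _ (hY0 x hx)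
    rw [norm_smul, Real.norm_eq_abs, abs_of_pos (div_pos h1 h2)]
    field_simp
  -- (i)
  have keyi : ∀ x : EuclideanSpace ℝ (Fin n), x ≠ 0 →
      Y x = (fun y => (‖y‖ / ‖Y y‖) • Y y) ((fun y => (‖Y y‖ / ‖y‖) • y) x) := by
    intro x hx
    have h1 : (0:ℝ) < ‖x‖ := hnx x hx
    have h2 : (0:ℝ) < ‖Y x‖ := hnx _ (hY0 x hx)
    have hc : (0:ℝ) < ‖Y x‖ / ‖x‖ := div_pos h2 h1
    simp only
    rw [hhomh _ hc.ne' x hx, smul_smul]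
    have : ‖Y x‖ / ‖x‖ * (‖x‖ / ‖Y x‖) = 1 := by field_simp
    rw [this, one_smul]
  -- Z homogeneity
  have hZhom : ∀ (l : ℝ), l ≠ 0 → ∀ y : EuclideanSpace ℝ (Fin n), y ≠ 0 →
      Z (l • y) = l • Z y := by
    intro l hl y hy
    have hly : l • y ≠ 0 := smul_ne_zero hl hy
    have h1 : Z (l • y) ≠ 0 := hZ0 _ hly
    have h2 : l • Z y ≠ 0 := smul_ne_zero hl (hZ0 y hy)
    apply hbij.injOn h1 h2
    rw [hYZ _ hly, hhom l hl _ (hZ0 y hy), hYZ y hy]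
  -- smoothness of norms
  have hNsm : ContDiffOn ℝ (⊤ : ℕ∞) (fun x : EuclideanSpace ℝ (Fin n) => ‖x‖) {x | x ≠ 0} :=
    contDiffOn_id.norm ℝ (fun x hx => hx)
  have hNYsm : ContDiffOn ℝ (⊤ : ℕ∞) (fun x : EuclideanSpace ℝ (Fin n) => ‖Y x‖) {x | x ≠ 0} :=
    hYsm.norm ℝ (fun x hx => hY0 x hx)
  have hNZsm : ContDiffOn ℝ (⊤ : ℕ∞) (fun x : EuclideanSpace ℝ (Fin n) => ‖Z x‖) {x | x ≠ 0} :=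
    hZsm.norm ℝ (fun x hx => hZ0 x hx)
  have hSsm : ContDiffOn ℝ (⊤ : ℕ∞) (fun x : EuclideanSpace ℝ (Fin n) => ‖Y x‖ / ‖x‖) {x | x ≠ 0} :=
    hNYsm.div hNsm (fun x hx => (hnx x hx).ne')
  have hhsm : ContDiffOn ℝ (⊤ : ℕ∞)
      (fun y : EuclideanSpace ℝ (Fin n) => (‖y‖ / ‖Y y‖) • Y y) {x | x ≠ 0} :=
    (hNsm.div hNYsm (fun x hx => (hnx _ (hY0 x hx)).ne')).smul hYsm
  have hh'sm : ContDiffOn ℝ (⊤ : ℕ∞)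
      (fun y : EuclideanSpace ℝ (Fin n) => (‖y‖ / ‖Z y‖) • Z y) {x | x ≠ 0} :=
    (hNsm.div hNZsm (fun x hx => (hnx _ (hZ0 x hx)).ne')).smul hZsm
  -- h maps to, h' maps to
  have hmapsh : ∀ x : EuclideanSpace ℝ (Fin n), x ≠ 0 → (‖x‖ / ‖Y x‖) • Y x ≠ 0 := by
    intro x hx
    exact smul_ne_zero (div_pos (hnx x hx) (hnx _ (hY0 x hx))).ne' (hY0 x hx)
  have hmapsh' : ∀ y : EuclideanSpace ℝ (Fin n), y ≠ 0 → (‖y‖ / ‖Z y‖) • Z y ≠ 0 := by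
    intro y hy
    exact smul_ne_zero (div_pos (hnx y hy) (hnx _ (hZ0 y hy))).ne' (hZ0 y hy)
  -- InvOn
  have hleft : ∀ x : EuclideanSpace ℝ (Fin n), x ≠ 0 →
      (fun y => (‖y‖ / ‖Z y‖) • Z y) ((fun y => (‖y‖ / ‖Y y‖) • Y y) x) = x := by
    intro x hx
    have h1 : (0:ℝ) < ‖x‖ := hnx x hx
    have h2 : (0:ℝ) < ‖Y x‖ := hnx _ (hY0 x hx)
    have hc : (0:ℝ) < ‖x‖ / ‖Y x‖ := div_pos h1 h2
    simp only
    rw [hZhom _ hc.ne' _ (hY0 x hx), hZY x hx, hnormh x hx, norm_smul,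
      Real.norm_eq_abs, abs_of_pos hc, smul_smul]
    have : ‖x‖ / (‖x‖ / ‖Y x‖ * ‖x‖) * (‖x‖ / ‖Y x‖) = 1 := by field_simp
    rw [this, one_smul]
  have hright : ∀ y : EuclideanSpace ℝ (Fin n), y ≠ 0 →
      (fun x => (‖x‖ / ‖Y x‖) • Y x) ((fun x => (‖x‖ / ‖Z x‖) • Z x) y) = y := by
    intro y hy
    have h1 : (0:ℝ) < ‖y‖ := hnx y hy
    have h2 : (0:ℝ) < ‖Z y‖ := hnx _ (hZ0 y hy)
    have hc : (0:ℝ) < ‖y‖ / ‖Z y‖ := div_pos h1 h2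
    simp only
    rw [hhomh _ hc.ne' _ (hZ0 y hy), hYZ y hy, smul_smul]
    have : ‖y‖ / ‖Z y‖ * (‖Z y‖ / ‖y‖) = 1 := by field_simp
    rw [this, one_smul]
  have hinvh : Set.InvOn (fun y : EuclideanSpace ℝ (Fin n) => (‖y‖ / ‖Z y‖) • Z y)
      (fun y => (‖y‖ / ‖Y y‖) • Y y) {x | x ≠ 0} {x | x ≠ 0} :=
    ⟨fun x hx => hleft x hx, fun y hy => hright y hy⟩
  refine ⟨keyi, ?_, ?_, hSsm, ?_, ?_, hhsm, ⟨_, hinvh, hh'sm⟩, ?_, ?_⟩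
  · intro x hx; exact div_pos (hnx _ (hY0 x hx)) (hnx x hx)
  · intro l hl x hx
    rw [hhom l hl x hx, norm_smul, norm_smul, Real.norm_eq_abs]
    have : |l| ≠ 0 := abs_ne_zero.2 hl
    rw [mul_div_mul_left _ _ this]
  · exact hinvh.bijOn (fun x hx => hmapsh x hx) (fun y hy => hmapsh' y hy)
  · intro l hl x hx; exact hhomh l hl x hx
  · intro x hx; exact hnormh x hx
  · intro x hx
    have := hhomh (-1) (by norm_num) x hx
    simp only [neg_one_smul] at this
    simpa using this
end

section
/- Let n ≥ 1. Let 𝒢 be the group, under composition, of bijections Y of ℝⁿ∖{0} that are homogeneous (Y(λ·x) = λ·Y(x) for every nonzero real λ) and such that both Y and Y⁻¹ are smooth (C^∞). Let 𝒩 ≤ 𝒢 be the subgroup of scaling maps x ↦ r(x)·x with r smooth, strictly positive and homogeneous of degree 0, and let ℋ ≤ 𝒢 be the subgroup of elements h with ‖h(x)‖ = ‖x‖ (Euclidean norm) and h(−x) = −h(x) for all x. Then 𝒩 is a normal abelian subgroup of 𝒢, and 𝒩 and ℋ are complementary in 𝒢: every g ∈ 𝒢 can be written in exactly one way as g = h ∘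 s with h ∈ ℋ and s ∈ 𝒩. Consequently 𝒢 is the (internal) semidirect product 𝒢 = 𝒩 ⋊ ℋ. -/
/-- The set of nonzero vectors of `ℝⁿ`. -/
def Enz (n : ℕ) : Set (EuclideanSpace ℝ (Fin n)) := {x | x ≠ 0}

/-- Membership in the TCT-group `Gⁿ`: a homogeneous smooth bijection of
`ℝⁿ∖{0}` with smooth inverse. -/
def InG (n : ℕ) (Y : EuclideanSpace ℝ (Fin n) → EuclideanSpace ℝ (Fin n)) :
    Prop :=
  Set.BijOn Y (Enz n) (Enz n) ∧
  (∀ (l : ℝ), l ≠ 0 → ∀ x : EuclideanSpace ℝ (Fin n), x ≠ 0 →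
    Y (l • x) = l • Y x) ∧
  ContDiffOn ℝ (⊤ : ℕ∞) Y (Enz n) ∧
  ∃ Z : EuclideanSpace ℝ (Fin n) → EuclideanSpace ℝ (Fin n),
    Set.InvOn Z Y (Enz n) (Enz n) ∧ ContDiffOn ℝ (⊤ : ℕ∞) Z (Enz n)

/-- Membership in the subgroup `Nⁿ` of scaling maps:
`Y(x) = r(x)·x` with `r` smooth, strictly positive and homogeneous of
degree 0. -/
def InN (n : ℕ) (Y : EuclideanSpace ℝ (Fin n) → EuclideanSpace ℝ (Fin n)) :
    Prop :=
  InG n Y ∧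
  ∃ r : EuclideanSpace ℝ (Fin n) → ℝ,
    (∀ x : EuclideanSpace ℝ (Fin n), x ≠ 0 → 0 < r x) ∧
    (∀ (l : ℝ), l ≠ 0 → ∀ x : EuclideanSpace ℝ (Fin n), x ≠ 0 →
      r (l • x) = r x) ∧
    ContDiffOn ℝ (⊤ : ℕ∞) r (Enz n) ∧
    (∀ x : EuclideanSpace ℝ (Fin n), x ≠ 0 → Y x = r x • x)

/-- Membership in the subgroup `Hⁿ` of norm-preserving odd elements. -/
def InH (n : ℕ) (Y : EuclideanSpace ℝ (Fin n) → EuclideanSpace ℝ (Fin n)) :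
    Prop :=
  InG n Y ∧
  (∀ x : EuclideanSpace ℝ (Fin n), x ≠ 0 → ‖Y x‖ = ‖x‖) ∧
  (∀ x : EuclideanSpace ℝ (Fin n), x ≠ 0 → Y (-x) = -Y x)

section Helpers

variable {n : ℕ}

abbrev E' (n : ℕ) := EuclideanSpace ℝ (Fin n)

lemma mem_Enz {x : E' n} : x ∈ Enz n ↔ x ≠ 0 := Iff.rfl

/-- Any left-inverse-on-`Enz` of `Y` maps `Enz` into `Enz`. -/
lemma Zmaps {Y Z : E' n → E' n} (hY : InG n Y)
    (hZ : Set.InvOn Z Y (Enz n) (Enz n)) : Set.MapsTo Z (Enz n) (Enz n) := by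
  intro x hx
  obtain ⟨w, hw, hwx⟩ := hY.1.surjOn hx
  rw [← hwx, hZ.1 hw]; exact hw

/-- The inverse of a homogeneous map is homogeneous. -/
lemma Zhom {Y Z : E' n → E' n} (hY : InG n Y)
    (hZ : Set.InvOn Z Y (Enz n) (Enz n)) (l : ℝ) (hl : l ≠ 0)
    (x : E' n) (hx : x ≠ 0) : Z (l • x) = l • Z x := by
  have hZx : Z x ≠ 0 := Zmaps hY hZ hx
  have h1 : Y (l • Z x) = l • x := by
    rw [hY.2.1 l hl (Z x) hZx, hZ.2 hx]
  rw [← h1, hZ.1 (smul_ne_zero hl hZx)]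

/-- Any map agreeing with `x ↦ ρ x • x` on `Enz` belongs to `Nⁿ`, for `ρ`
positive, homogeneous of degree 0 and smooth. -/
lemma InN_of_rho (ρ : E' n → ℝ)
    (hpos : ∀ x : E' n, x ≠ 0 → 0 < ρ x)
    (hhom : ∀ (l : ℝ), l ≠ 0 → ∀ x : E' n, x ≠ 0 → ρ (l • x) = ρ x)
    (hsm : ContDiffOn ℝ (⊤ : ℕ∞) ρ (Enz n))
    (f : E' n → E' n) (hf : ∀ x : E' n, x ≠ 0 → f x = ρ x • x) :
    InN n f := by
  have hne : ∀ x : E' n, x ≠ 0 → ρ x ≠ 0 := fun x hx => (hpos x hx).ne'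
  have hmf : Set.MapsTo f (Enz n) (Enz n) := by
    intro x hx
    rw [mem_Enz, hf x hx]
    exact smul_ne_zero (hne x hx) hx
  set Z : E' n → E' n := fun x => (ρ x)⁻¹ • x with hZdef
  have hmZ : Set.MapsTo Z (Enz n) (Enz n) := by
    intro x hx
    exact smul_ne_zero (inv_ne_zero (hne x hx)) hx
  have hinv : Set.InvOn Z f (Enz n) (Enz n) := by
    constructor
    · intro x hx
      have hx' : (x : E' n) ≠ 0 := hx
      simp only [hZdef, hf x hx', hhom (ρ x) (hne x hx') x hx', smul_smul,
        inv_mul_cancel₀ (hne x hx'), one_smul]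
    · intro x hx
      have hx' : (x : E' n) ≠ 0 := hx
      have hZx : Z x ≠ 0 := hmZ hx
      rw [hf _ hZx]
      simp only [hZdef, hhom (ρ x)⁻¹ (inv_ne_zero (hne x hx')) x hx', smul_smul,
        mul_inv_cancel₀ (hne x hx'), one_smul]
  refine ⟨⟨hinv.bijOn hmf hmZ, ?_, ?_, Z, hinv, ?_⟩, ρ, hpos, hhom, hsm, hf⟩
  · intro l hl x hx
    rw [hf _ (smul_ne_zero hl hx), hf x hx, hhom l hl x hx, smul_comm]
  · exact (hsm.smul contDiffOn_id).congr fun x hx => hf x hx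
  · exact (hsm.inv (fun x hx => hne x hx)).smul contDiffOn_id

/-- Key computation: the "normalized" maps built from mutually inverse
homogeneous maps are mutually inverse. -/
lemma phi_inv {A B : E' n → E' n}
    (hBhom : ∀ (l : ℝ), l ≠ 0 → ∀ x : E' n, x ≠ 0 → B (l • x) = l • B x)
    (hAne : ∀ x : E' n, x ≠ 0 → A x ≠ 0)
    (hBA : ∀ x : E' n, x ≠ 0 → B (A x) = x) (x : E' n) (hx : x ≠ 0) :
    (‖((‖x‖ / ‖A x‖) • A x : E' n)‖ / ‖B ((‖x‖ / ‖A x‖) • A x)‖) •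
      B ((‖x‖ / ‖A x‖) • A x) = x := by
  have hxn : ‖x‖ ≠ 0 := norm_ne_zero_iff.2 hx
  have hAn : ‖A x‖ ≠ 0 := norm_ne_zero_iff.2 (hAne x hx)
  have hc : (‖x‖ / ‖A x‖) ≠ 0 := div_ne_zero hxn hAn
  have hBy : B ((‖x‖ / ‖A x‖) • A x) = (‖x‖ / ‖A x‖) • x := by
    rw [hBhom _ hc _ (hAne x hx), hBA x hx]
  rw [hBy, norm_smul, norm_smul, smul_smul]
  have habs : ‖(‖x‖ / ‖A x‖ : ℝ)‖ = ‖x‖ / ‖A x‖ := by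
    rw [Real.norm_eq_abs, abs_of_nonneg (by positivity)]
  rw [habs]
  have hscal : ‖x‖ / ‖A x‖ * ‖A x‖ / (‖x‖ / ‖A x‖ * ‖x‖) * (‖x‖ / ‖A x‖) = 1 := by
    field_simp
  rw [hscal, one_smul]

end Helpers


/-- The TCT-group splits as the semidirect product `Gⁿ = Nⁿ ⋊ Hⁿ`:
`Nⁿ` is an abelian normal subgroup, and every element of `Gⁿ` factors
uniquely as an element of `Hⁿ` composed with an element of `Nⁿ`. -/
theorem tct_group_semidirect_product (n : ℕ) (hn : 1 ≤ n) :
    -- `Nⁿ` is abelian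
    (∀ s₁ s₂, InN n s₁ → InN n s₂ →
      ∀ x : EuclideanSpace ℝ (Fin n), x ≠ 0 → s₁ (s₂ x) = s₂ (s₁ x)) ∧
    -- `Nⁿ` is normal in `Gⁿ`
    (∀ Y Z s, InG n Y → Set.InvOn Z Y (Enz n) (Enz n) → InN n s →
      InN n (fun x => Y (s (Z x)))) ∧
    -- existence of the factorization `g = h ∘ s`
    (∀ Y, InG n Y → ∃ h s, InH n h ∧ InN n s ∧
      ∀ x : EuclideanSpace ℝ (Fin n), x ≠ 0 → Y x = h (s x)) ∧
    -- uniqueness of the factorization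
    (∀ Y h₁ s₁ h₂ s₂, InG n Y → InH n h₁ → InN n s₁ → InH n h₂ → InN n s₂ →
      (∀ x : EuclideanSpace ℝ (Fin n), x ≠ 0 → Y x = h₁ (s₁ x)) →
      (∀ x : EuclideanSpace ℝ (Fin n), x ≠ 0 → Y x = h₂ (s₂ x)) →
      ∀ x : EuclideanSpace ℝ (Fin n), x ≠ 0 → h₁ x = h₂ x ∧ s₁ x = s₂ x) := by
  refine ⟨?_, ?_, ?_, ?_⟩
  · -- abelian
    rintro s₁ s₂ ⟨hG₁, r₁, hp₁, hh₁, -, he₁⟩ ⟨hG₂, r₂, hp₂, hh₂, -, he₂⟩ x hx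
    have h2 : s₂ x ≠ 0 := by
      rw [he₂ x hx]; exact smul_ne_zero (hp₂ x hx).ne' hx
    have h1 : s₁ x ≠ 0 := by
      rw [he₁ x hx]; exact smul_ne_zero (hp₁ x hx).ne' hx
    calc s₁ (s₂ x) = r₁ (s₂ x) • s₂ x := he₁ _ h2
      _ = (r₁ x * r₂ x) • x := by
          rw [he₂ x hx, hh₁ _ (hp₂ x hx).ne' x hx, smul_smul]
      _ = (r₂ x * r₁ x) • x := by rw [mul_comm]
      _ = r₂ (s₁ x) • s₁ x := by
          rw [he₁ x hx, hh₂ _ (hp₁ x hx).ne' x hx, smul_smul]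
      _ = s₂ (s₁ x) := (he₂ _ h1).symm
  · -- normality
    rintro Y Z s hY hZ ⟨hGs, r, hpr, hhr, hsr, her⟩
    have hZm := Zmaps hY hZ
    obtain ⟨Z', hZ'inv, hZ'sm⟩ := hY.2.2.2
    have hZZ' : Set.EqOn Z Z' (Enz n) := by
      intro x hx
      have h1 : Z' x ∈ Enz n := Zmaps hY hZ'inv hx
      have h2 : Y (Z' x) = x := hZ'inv.2 hx
      calc Z x = Z (Y (Z' x)) := by rw [h2]
        _ = Z' x := hZ.1 h1
    have hsm : ContDiffOn ℝ (⊤ : ℕ∞) (fun x => r (Z x)) (Enz n) :=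
      (hsr.comp hZ'sm (Zmaps hY hZ'inv)).congr fun x hx => by
        simp only [Function.comp]; rw [hZZ' hx]
    refine InN_of_rho (fun x => r (Z x)) (fun x hx => hpr _ (hZm hx))
      (fun l hl x hx => ?_) hsm _ (fun x hx => ?_)
    · show r (Z (l • x)) = r (Z x)
      rw [Zhom hY hZ l hl x hx, hhr l hl _ (hZm hx)]
    · show Y (s (Z x)) = r (Z x) • x
      have hZx : Z x ≠ 0 := hZm hx
      rw [her _ hZx, hY.2.1 _ (hpr _ hZx).ne' _ hZx, hZ.2 hx]
  · -- existence
    intro Y hY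
    obtain ⟨Z, hZinv, hZsm⟩ := hY.2.2.2
    have hYne : ∀ x : E' n, x ≠ 0 → Y x ≠ 0 := fun x hx => hY.1.mapsTo hx
    have hZm := Zmaps hY hZinv
    have hZhom := Zhom hY hZinv
    have normId : ContDiffOn ℝ (⊤ : ℕ∞) (fun x : E' n => ‖x‖) (Enz n) :=
      contDiffOn_id.norm ℝ fun x hx => hx
    have normY : ContDiffOn ℝ (⊤ : ℕ∞) (fun x : E' n => ‖Y x‖) (Enz n) :=
      hY.2.2.1.norm ℝ fun x hx => hYne x hx
    have normZ : ContDiffOn ℝ (⊤ : ℕ∞) (fun x : E' n => ‖Z x‖) (Enz n) :=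
      hZsm.norm ℝ fun x hx => hZm hx
    set h : E' n → E' n := fun x => (‖x‖ / ‖Y x‖) • Y x with hhdef
    set Zh : E' n → E' n := fun x => (‖x‖ / ‖Z x‖) • Z x with hZhdef
    set s : E' n → E' n := fun x => (‖Y x‖ / ‖x‖) • x with hsdef
    have hcne : ∀ x : E' n, x ≠ 0 → (‖x‖ / ‖Y x‖) ≠ 0 := fun x hx =>
      div_ne_zero (norm_ne_zero_iff.2 hx) (norm_ne_zero_iff.2 (hYne x hx))
    have hhne : ∀ x : E' n, x ≠ 0 → h x ≠ 0 := fun x hx =>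
      smul_ne_zero (hcne x hx) (hYne x hx)
    have hZhne : ∀ x : E' n, x ≠ 0 → Zh x ≠ 0 := fun x hx =>
      smul_ne_zero (div_ne_zero (norm_ne_zero_iff.2 hx)
        (norm_ne_zero_iff.2 (hZm hx))) (hZm hx)
    have hinvh : Set.InvOn Zh h (Enz n) (Enz n) := by
      constructor
      · intro x hx
        exact phi_inv hZhom hYne (fun x hx => hZinv.1 hx) x hx
      · intro x hx
        exact phi_inv hY.2.1 (fun x hx => hZm hx) (fun x hx => hZinv.2 hx) x hx
    have hhom_h : ∀ (l : ℝ), l ≠ 0 → ∀ x : E' n, x ≠ 0 →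
        h (l • x) = l • h x := by
      intro l hl x hx
      have hla : |l| ≠ 0 := abs_ne_zero.2 hl
      show (‖l • x‖ / ‖Y (l • x)‖) • Y (l • x) = l • (‖x‖ / ‖Y x‖) • Y x
      rw [hY.2.1 l hl x hx, norm_smul, norm_smul, Real.norm_eq_abs,
        mul_div_mul_left _ _ hla, smul_comm]
    have hsm_h : ContDiffOn ℝ (⊤ : ℕ∞) h (Enz n) := by
      exact (normId.div normY fun x hx =>
        norm_ne_zero_iff.2 (hYne x hx)).smul hY.2.2.1
    have hsm_Zh : ContDiffOn ℝ (⊤ : ℕ∞) Zh (Enz n) := by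
      exact (normId.div normZ fun x hx =>
        norm_ne_zero_iff.2 (hZm hx)).smul hZsm
    have hGh : InG n h :=
      ⟨hinvh.bijOn (fun x hx => hhne x hx) (fun x hx => hZhne x hx),
        hhom_h, hsm_h, Zh, hinvh, hsm_Zh⟩
    have hnorm_h : ∀ x : E' n, x ≠ 0 → ‖h x‖ = ‖x‖ := by
      intro x hx
      show ‖(‖x‖ / ‖Y x‖) • Y x‖ = ‖x‖
      rw [norm_smul, Real.norm_eq_abs, abs_of_nonneg (by positivity),
        div_mul_cancel₀ _ (norm_ne_zero_iff.2 (hYne x hx))]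
    have hodd_h : ∀ x : E' n, x ≠ 0 → h (-x) = -h x := by
      intro x hx
      have := hhom_h (-1) (by norm_num) x hx
      simpa using this
    refine ⟨h, s, ⟨hGh, hnorm_h, hodd_h⟩, ?_, ?_⟩
    · refine InN_of_rho (fun x => ‖Y x‖ / ‖x‖)
        (fun x hx => div_pos (norm_pos_iff.2 (hYne x hx)) (norm_pos_iff.2 hx))
        (fun l hl x hx => ?_) (normY.div normId fun x hx =>
          norm_ne_zero_iff.2 hx) s (fun x hx => rfl)
      show ‖Y (l • x)‖ / ‖l • x‖ = ‖Y x‖ / ‖x‖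
      rw [hY.2.1 l hl x hx, norm_smul, norm_smul, Real.norm_eq_abs,
        mul_div_mul_left _ _ (abs_ne_zero.2 hl)]
    · intro x hx
      have hxn : ‖x‖ ≠ 0 := norm_ne_zero_iff.2 hx
      have hYn : ‖Y x‖ ≠ 0 := norm_ne_zero_iff.2 (hYne x hx)
      have hc : (‖Y x‖ / ‖x‖) ≠ 0 := div_ne_zero hYn hxn
      show Y x = h ((‖Y x‖ / ‖x‖) • x)
      have hYs : Y ((‖Y x‖ / ‖x‖) • x) = (‖Y x‖ / ‖x‖) • Y x :=
        hY.2.1 _ hc x hx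
      show Y x = (‖(‖Y x‖ / ‖x‖) • x‖ / ‖Y ((‖Y x‖ / ‖x‖) • x)‖) •
        Y ((‖Y x‖ / ‖x‖) • x)
      rw [hYs, norm_smul, norm_smul, smul_smul, Real.norm_eq_abs,
        abs_of_nonneg (by positivity)]
      have hscal : ‖Y x‖ / ‖x‖ * ‖x‖ / (‖Y x‖ / ‖x‖ * ‖Y x‖) * (‖Y x‖ / ‖x‖) = 1 := by
        field_simp
      rw [hscal, one_smul]
  · -- uniqueness
    rintro Y h₁ s₁ h₂ s₂ hY hH₁ ⟨hG₁, r₁, hp₁, hh₁, -, he₁⟩ hH₂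
      ⟨hG₂, r₂, hp₂, hh₂, -, he₂⟩ hf₁ hf₂ x hx
    have hxn : (0:ℝ) < ‖x‖ := norm_pos_iff.2 hx
    have e1 : Y x = r₁ x • h₁ x := by
      rw [hf₁ x hx, he₁ x hx, hH₁.1.2.1 _ (hp₁ x hx).ne' x hx]
    have e2 : Y x = r₂ x • h₂ x := by
      rw [hf₂ x hx, he₂ x hx, hH₂.1.2.1 _ (hp₂ x hx).ne' x hx]
    have n1 : ‖Y x‖ = r₁ x * ‖x‖ := by
      rw [e1, norm_smul, Real.norm_eq_abs, abs_of_pos (hp₁ x hx),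
        hH₁.2.1 x hx]
    have n2 : ‖Y x‖ = r₂ x * ‖x‖ := by
      rw [e2, norm_smul, Real.norm_eq_abs, abs_of_pos (hp₂ x hx),
        hH₂.2.1 x hx]
    have hr : r₁ x = r₂ x :=
      mul_right_cancel₀ hxn.ne' (n1 ▸ n2)
    have hh : h₁ x = h₂ x := by
      have : r₁ x • h₁ x = r₁ x • h₂ x := by rw [← e1, e2, hr]
      exact smul_right_injective _ (hp₁ x hx).ne' this
    exact ⟨hh, by rw [he₁ x hx, he₂ x hx, hr]⟩
end
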